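/- Let m = 4, κ_1(x_1,x_2,x_3,x_4) = x_1 ∧ ((¬x_2 ∧ x_3 ∧ x_4) ∨ (x_2 ∧ ¬x_3 ∧ ¬x_4)), and v = (1,0,0,0), so c = κ_1(v) = 0. Then feature 1 is irrelevant (belongs to no AXp) while feature 4 is relevant (belongs to some AXp), yet Sv(1) = 1/12 ≠ 0 and Sv(4) = 0 (issue I4: an irrelevant feature gets nonzero Shapley importance while a relevant feature gets zero). -/

import Mathlib

/-- The set of points agreeing with `v` on all features in `S`. -/
def upsilon {m : ℕ} (v : Fin m → Bool) (S : Finset (Fin m)) : Set (Fin m → Bool) :=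
  {x | ∀ i ∈ S, x i = v i}

/-- Weak abductive explanation: fixing the features in `S` to their values in `v`
forces the prediction to remain `κ v`. -/
def WAXp {m : ℕ} (κ : (Fin m → Bool) → Bool) (v : Fin m → Bool) (S : Finset (Fin m)) : Prop :=
  ∀ x ∈ upsilon v S, κ x = κ v

/-- Abductive explanation: a subset-minimal weak AXp. -/
def AXp {m : ℕ} (κ : (Fin m → Bool) → Bool) (v : Fin m → Bool) (S : Finset (Fin m)) : Prop :=
  WAXp κ v S ∧ ∀ T ⊂ S, ¬ WAXp κ v T

/-- Weak contrastive explanation: freeing the features in `S` (fixing all others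
to their values in `v`) allows the prediction to change. -/
def WCXp {m : ℕ} (κ : (Fin m → Bool) → Bool) (v : Fin m → Bool) (S : Finset (Fin m)) : Prop :=
  ∃ x : Fin m → Bool, (∀ i ∉ S, x i = v i) ∧ κ x ≠ κ v

/-- Contrastive explanation: a subset-minimal weak CXp. -/
def CXp {m : ℕ} (κ : (Fin m → Bool) → Bool) (v : Fin m → Bool) (S : Finset (Fin m)) : Prop :=
  WCXp κ v S ∧ ∀ T ⊂ S, ¬ WCXp κ v T

/-- A feature is relevant if it belongs to some AXp. -/
def Relevant {m : ℕ} (κ : (Fin m → Bool) → Bool) (v : Fin m → Bool) (i : Fin m) : Prop :=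
  ∃ S, AXp κ v S ∧ i ∈ S

/-- The sufficiency function `σ`: `σ s = true` iff fixing exactly the features
selected by `s` to their values in `v` forces the prediction `κ v` everywhere. -/
def sigmaFn {m : ℕ} (κ : (Fin m → Bool) → Bool) (v : Fin m → Bool) (s : Fin m → Bool) : Bool :=
  decide (∀ x : Fin m → Bool, (∀ i : Fin m, s i = true → x i = v i) → κ x = κ v)

/-- Average value of the classifier over the points agreeing with `v` on `S`. -/
def phi {m : ℕ} (κ : (Fin m → Bool) → Bool) (v : Fin m → Bool) (S : Finset (Fin m)) : ℚ :=
  (1 / 2 ^ (m - S.card)) *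
    ∑ x ∈ Finset.univ.filter (fun x : Fin m → Bool => ∀ i ∈ S, x i = v i),
      (if κ x = true then (1 : ℚ) else 0)

/-- The Shapley value of feature `i` for the instance `(v, κ v)`. -/
def Sv {m : ℕ} (κ : (Fin m → Bool) → Bool) (v : Fin m → Bool) (i : Fin m) : ℚ :=
  ∑ S ∈ (Finset.univ.erase i).powerset,
    ((S.card.factorial : ℚ) * ((m - S.card - 1).factorial : ℚ) / (m.factorial : ℚ)) *
      (phi κ v (insert i S) - phi κ v S)

/-- The classifier κ₁(x₁,x₂,x₃,x₄) = x₁ ∧ ((¬x₂ ∧ x₃ ∧ x₄) ∨ (x₂ ∧ ¬x₃ ∧ ¬x₄))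
(features are 0-indexed). -/
def kappa1 : (Fin 4 → Bool) → Bool := fun x =>
  x 0 && ((!(x 1) && x 2 && x 3) || (x 1 && !(x 2) && !(x 3)))

/-- The point v = (1,0,0,0). -/
def v1000 : Fin 4 → Bool := ![true, false, false, false]

/-!
κ₁ = x₁ ∧ g(x₂, x₃, x₄) and v₁ = 1, so a point predicted 0 once x₁ is set to v₁ was predicted 0
already; hence dropping feature 1 from a weak AXp leaves a weak AXp, and no AXp contains it.
Feature 4 lies in the AXp {2, 4} (the set `{1, 3}` below, features being 0-indexed). The Shapley
values are a finite computation: κ₁ has exactly the positive points (1,0,1,1) and (1,1,0,0), so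
fixing x₁ doubles φ and Sv(1) is a positive weighted sum of values of φ, while for feature 4 the
contributions of the two points cancel under the exchange of features 2 and 3.
-/
section

variable {m : ℕ} {κ : (Fin m → Bool) → Bool} {v : Fin m → Bool}

theorem WAXp.mono {S T : Finset (Fin m)} (h : WAXp κ v S) (hST : S ⊆ T) : WAXp κ v T :=
  fun x hx => h x fun i hi => hx i (hST hi)

theorem WAXp.erase_of_update {S : Finset (Fin m)} {i : Fin m}
    (hi : ∀ x, κ (Function.update x i (v i)) = κ v → κ x = κ v) (h : WAXp κ v S) :
    WAXp κ v (S.erase i) := by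
  intro x hx
  refine hi x (h _ fun j hj => ?_)
  by_cases hji : j = i
  · subst hji; simp
  · simpa [hji] using hx j (Finset.mem_erase.2 ⟨hji, hj⟩)

theorem AXp.of_forall_erase {S : Finset (Fin m)} (hS : WAXp κ v S)
    (hmin : ∀ j ∈ S, ¬ WAXp κ v (S.erase j)) : AXp κ v S := by
  refine ⟨hS, fun T hTS hT => ?_⟩
  obtain ⟨j, hjS, hjT⟩ := Finset.exists_of_ssubset hTS
  exact hmin j hjS <| hT.mono fun k hk =>
    Finset.mem_erase.2 ⟨ne_of_mem_of_not_mem hk hjT, hTS.subset hk⟩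

theorem not_relevant_of_update {i : Fin m}
    (hi : ∀ x, κ (Function.update x i (v i)) = κ v → κ x = κ v) : ¬ Relevant κ v i := by
  rintro ⟨S, ⟨hS, hmin⟩, hiS⟩
  exact hmin _ (Finset.erase_ssubset hiS) (hS.erase_of_update hi)

end

theorem kappa1_v1000 : kappa1 v1000 = false := rfl

theorem not_relevant_kappa1_zero : ¬ Relevant kappa1 v1000 0 :=
  not_relevant_of_update (by decide)

theorem waxp_kappa1_one_three : WAXp kappa1 v1000 {1, 3} := by
  intro x hx
  obtain ⟨h1, h3⟩ : x 1 = false ∧ x 3 = false := ⟨hx 1 (by simp), hx 3 (by simp)⟩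
  simp [kappa1, v1000, h1, h3]

theorem axp_kappa1_one_three : AXp kappa1 v1000 {1, 3} := by
  refine .of_forall_erase waxp_kappa1_one_three ?_
  simp only [Finset.mem_insert, Finset.mem_singleton]
  rintro j (rfl | rfl) h
  · exact absurd (h ![true, true, false, false] (by unfold upsilon; decide)) (by decide)
  · exact absurd (h ![true, false, true, true] (by unfold upsilon; decide)) (by decide)

theorem sv_kappa1_zero : Sv kappa1 v1000 0 = 1 / 12 := by decide +kernel

theorem sv_kappa1_three : Sv kappa1 v1000 3 = 0 := by decide +kernel

theorem stmt13 :
    kappa1 v1000 = false ∧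
    ¬ Relevant kappa1 v1000 0 ∧
    Relevant kappa1 v1000 3 ∧
    Sv kappa1 v1000 0 = 1 / 12 ∧
    Sv kappa1 v1000 0 ≠ 0 ∧
    Sv kappa1 v1000 3 = 0 :=
  ⟨kappa1_v1000, not_relevant_kappa1_zero, ⟨{1, 3}, axp_kappa1_one_three, by simp⟩,
    sv_kappa1_zero, by norm_num [sv_kappa1_zero], sv_kappa1_three⟩
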